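/- arXiv:2402.16678 — 8 statements merged into one kernel-verified Lean document; each statement's English description precedes it below -/
import Mathlib

section
/- If H is a linear forest consisting of k paths with a_1, ..., a_k vertices respectively, then every connected H-free graph has diameter at most k - 3 + (a_1 + ... + a_k). -/
open SimpleGraph

/-- `G` is `H`-free: `G` contains no induced subgraph isomorphic to `H`,
equivalently there is no graph embedding of `H` into `G`. -/
def HFree {V W : Type*} (G : SimpleGraph V) (H : SimpleGraph W) : Prop :=
  IsEmpty (H ↪g G)

/-- The linear forest that is the disjoint union of `k` paths, the `i`-th
path having `a i` vertices (vertices of each path are consecutive numbers). -/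
def linearForest (k : ℕ) (a : Fin k → ℕ) : SimpleGraph (Σ i : Fin k, Fin (a i)) where
  Adj x y := x.1 = y.1 ∧ ((x.2 : ℕ) + 1 = (y.2 : ℕ) ∨ (y.2 : ℕ) + 1 = (x.2 : ℕ))
  symm := ⟨by rintro x y ⟨h1, h2⟩; exact ⟨h1.symm, h2.symm⟩⟩
  loopless := ⟨by rintro x ⟨-, h⟩; omega⟩

/-!
Lay the `k` paths of `H` one after another along a path graph, separated by single unused
vertices; this needs `∑ i, a i + k - 1` vertices and is an induced copy of `H`. On the other hand
the vertices of a shortest walk induce a path graph in `G`, since an edge between two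
non-consecutive vertices would shorten it. So if `G.dist u v ≥ ∑ i, a i + k - 2`, then `H` is an
induced subgraph of `G`.
-/

namespace SimpleGraph.Walk

variable {V : Type*} {G : SimpleGraph V} {u v : V}

lemma le_add_one_of_adj_getVert_of_length_eq_dist (p : G.Walk u v) (hp : p.length = G.dist u v)
    {i j : ℕ} (hj : j ≤ p.length) (hadj : G.Adj (p.getVert i) (p.getVert j)) :
    j ≤ i + 1 := by
  have := dist_le ((p.take i).append (cons hadj (p.drop j)))
  simp only [length_append, take_length, length_cons, drop_length] at this
  omega

lemma adj_getVert_iff_of_length_eq_dist (p : G.Walk u v) (hp : p.length = G.dist u v)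
    {i j : ℕ} (hi : i ≤ p.length) (hj : j ≤ p.length) :
    G.Adj (p.getVert i) (p.getVert j) ↔ i + 1 = j ∨ j + 1 = i := by
  constructor
  · intro hadj
    have hji := p.le_add_one_of_adj_getVert_of_length_eq_dist hp hj hadj
    have hij := p.le_add_one_of_adj_getVert_of_length_eq_dist hp hi hadj.symm
    have hne : i ≠ j := by rintro rfl; exact hadj.ne rfl
    omega
  · rintro (rfl | rfl)
    · exact p.adj_getVert_succ (by omega)
    · exact (p.adj_getVert_succ (by omega)).symm

def pathGraphEmbeddingOfLengthEqDist (p : G.Walk u v) (hp : p.length = G.dist u v) :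
    pathGraph (p.length + 1) ↪g G where
  toFun i := p.getVert i
  inj' i j h := Fin.ext <| (p.isPath_of_length_eq_dist hp).getVert_injOn
    (Nat.lt_succ_iff.mp i.isLt) (Nat.lt_succ_iff.mp j.isLt) h
  map_rel_iff' {i j} := by
    rw [pathGraph_adj]
    exact p.adj_getVert_iff_of_length_eq_dist hp (Nat.lt_succ_iff.mp i.isLt)
      (Nat.lt_succ_iff.mp j.isLt)

end SimpleGraph.Walk

namespace linearForest

variable {k : ℕ} {a : Fin k → ℕ}

/-- Where the `i`-th path starts when the paths are laid out along a path graph, one unused vertex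
after each. -/
def offset (a : Fin k → ℕ) (i : Fin k) : ℕ :=
  ∑ l ∈ Finset.Iio i, (a l + 1)

def pos (a : Fin k → ℕ) (x : Σ i : Fin k, Fin (a i)) : ℕ :=
  offset a x.1 + x.2

lemma offset_add_le_sum {i : Fin k} {s : Finset (Fin k)} (hs : insert i (Finset.Iio i) ⊆ s) :
    offset a i + (a i + 1) ≤ ∑ l ∈ s, (a l + 1) := by
  calc offset a i + (a i + 1) = ∑ l ∈ insert i (Finset.Iio i), (a l + 1) := by
        rw [Finset.sum_insert Finset.notMem_Iio_self, add_comm, offset]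
    _ ≤ ∑ l ∈ s, (a l + 1) := Finset.sum_le_sum_of_subset hs

lemma pos_add_two_le_sum (x : Σ i : Fin k, Fin (a i)) : pos a x + 2 ≤ ∑ i, a i + k := by
  have hx := offset_add_le_sum (a := a) (Finset.subset_univ (insert x.1 (Finset.Iio x.1)))
  rw [Finset.sum_add_distrib, Finset.sum_const, Finset.card_univ, Fintype.card_fin,
    smul_eq_mul, mul_one] at hx
  have := x.2.isLt
  unfold pos
  omega

lemma pos_add_two_le_of_fst_lt {x y : Σ i : Fin k, Fin (a i)} (h : x.1 < y.1) :
    pos a x + 2 ≤ pos a y := by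
  have hxy := offset_add_le_sum (a := a) (s := Finset.Iio y.1) <|
    Finset.insert_subset (Finset.mem_Iio.mpr h) (Finset.Iio_subset_Iio h.le)
  have := x.2.isLt
  unfold pos
  rw [← offset] at hxy
  omega

lemma fst_eq_of_pos_le_pos_add_one {x y : Σ i : Fin k, Fin (a i)}
    (hxy : pos a x ≤ pos a y + 1) (hyx : pos a y ≤ pos a x + 1) : x.1 = y.1 := by
  rcases lt_trichotomy x.1 y.1 with h | h | h
  · have := pos_add_two_le_of_fst_lt h; omega
  · exact h
  · have := pos_add_two_le_of_fst_lt h; omega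

def embeddingPathGraph {n : ℕ} (hn : ∑ i, a i + k ≤ n + 1) : linearForest k a ↪g pathGraph n where
  toFun x := ⟨pos a x, by have := pos_add_two_le_sum x; omega⟩
  inj' := by
    rintro ⟨i, s⟩ ⟨j, t⟩ h
    have hpos : pos a ⟨i, s⟩ = pos a ⟨j, t⟩ := congrArg Fin.val h
    obtain rfl : i = j :=
      fst_eq_of_pos_le_pos_add_one (x := ⟨i, s⟩) (y := ⟨j, t⟩) (by omega) (by omega)
    simpa [pos, Fin.ext_iff] using hpos
  map_rel_iff' {x y} := by
    obtain ⟨i, s⟩ := x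
    obtain ⟨j, t⟩ := y
    rw [pathGraph_adj]
    change (pos a ⟨i, s⟩ + 1 = pos a ⟨j, t⟩ ∨ pos a ⟨j, t⟩ + 1 = pos a ⟨i, s⟩) ↔
      i = j ∧ ((s : ℕ) + 1 = t ∨ (t : ℕ) + 1 = s)
    constructor
    · intro h
      obtain rfl : i = j :=
        fst_eq_of_pos_le_pos_add_one (x := ⟨i, s⟩) (y := ⟨j, t⟩) (by omega) (by omega)
      refine ⟨rfl, ?_⟩
      dsimp only [pos] at h ⊢
      omega
    · rintro ⟨rfl, h⟩
      dsimp only [pos] at h ⊢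
      omega

end linearForest

theorem diameter_le_of_linearForest_free_general {V : Type*} (G : SimpleGraph V)
    (k : ℕ) (a : Fin k → ℕ)
    (hconn : G.Connected) (hfree : HFree G (linearForest k a)) :
    ∀ u v : V, (G.dist u v : ℤ) ≤ (k : ℤ) - 3 + ∑ i, (a i : ℤ) := by
  intro u v
  by_contra! hlong
  obtain ⟨p, hp⟩ := hconn.exists_walk_length_eq_dist u v
  have hn : ∑ i, a i + k ≤ p.length + 1 + 1 := by
    rw [hp]
    zify
    omega
  exact hfree.false
    ((linearForest.embeddingPathGraph hn).trans (p.pathGraphEmbeddingOfLengthEqDist hp))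

/-- If `H` is a linear forest consisting of `k` paths with `a 0, …, a (k-1)` vertices,
then every connected `H`-free graph has diameter at most `k - 3 + ∑ i, a i`. -/
theorem diameter_le_of_linearForest_free {V : Type*} (G : SimpleGraph V)
    (k : ℕ) (hk : 1 ≤ k) (a : Fin k → ℕ) (ha : ∀ i, 1 ≤ a i)
    (hconn : G.Connected) (hfree : HFree G (linearForest k a)) :
    ∀ u v : V, (G.dist u v : ℤ) ≤ (k : ℤ) - 3 + ∑ i, (a i : ℤ) :=
  diameter_le_of_linearForest_free_general G k a hconn hfree
end

section
/- Let G be a graph, let u, v be true twins in G with u ≠ v, and let G' be the induced subgraph of G on V(G) \ {v}. Then for all vertices x, y in G', the distance between x and y in G' equals the distance between x and y in G. -/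
/-!
Sending `v` to its twin `u` and fixing every other vertex maps `G` onto `G - v` so that
adjacent vertices go to adjacent or equal ones: a neighbour of `v` other than `u` is a
neighbour of `u`. Such a map does not increase distances, and neither does the inclusion
`G - v → G`, so the two distances agree.
-/

open SimpleGraph

open Classical in
noncomputable def collapseVertex {V : Type*} {u v : V} (huv : u ≠ v) (a : V) : ({v}ᶜ : Set V) :=
  if h : a = v then ⟨u, huv⟩ else ⟨a, h⟩

lemma collapseVertex_of_ne {V : Type*} {u v : V} (huv : u ≠ v) {a : V} (ha : a ≠ v) :
    collapseVertex huv a = ⟨a, ha⟩ :=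
  dif_neg ha

lemma collapseVertex_self {V : Type*} {u v : V} (huv : u ≠ v) :
    collapseVertex huv v = ⟨u, huv⟩ :=
  dif_pos rfl

namespace SimpleGraph

variable {V W : Type*} {G : SimpleGraph V} {H : SimpleGraph W}

lemma Walk.exists_walk_length_le_of_adj_or_eq {f : V → W}
    (hf : ∀ a b, G.Adj a b → f a = f b ∨ H.Adj (f a) (f b)) {a b : V} (p : G.Walk a b) :
    ∃ q : H.Walk (f a) (f b), q.length ≤ p.length := by
  induction p with
  | nil => exact ⟨.nil, le_rfl⟩
  | @cons a c b hac p ih =>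
    obtain ⟨q, hq⟩ := ih
    rcases hf a c hac with hfac | hfac
    · exact ⟨q.copy hfac.symm rfl, by simp only [Walk.length_copy, Walk.length_cons]; omega⟩
    · exact ⟨.cons hfac q, by simp [hq]⟩

lemma edist_le_edist_of_adj_or_eq {f : V → W}
    (hf : ∀ a b, G.Adj a b → f a = f b ∨ H.Adj (f a) (f b)) (a b : V) :
    H.edist (f a) (f b) ≤ G.edist a b :=
  le_iInf fun p ↦
    let ⟨q, hq⟩ := p.exists_walk_length_le_of_adj_or_eq hf
    (edist_le q).trans (by exact_mod_cast hq)

lemma eq_or_adj_of_adj_of_closed_nbhd_eq {u v b : V}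
    (htwin : insert u (G.neighborSet u) = insert v (G.neighborSet v)) (hvb : G.Adj v b) :
    u = b ∨ G.Adj u b := by
  have hb : b ∈ insert u (G.neighborSet u) := htwin ▸ Set.mem_insert_of_mem v hvb
  exact (Set.mem_insert_iff.mp hb).imp Eq.symm id

variable {u v : V}

lemma collapseVertex_eq_or_adj_of_adj_self (huv : u ≠ v)
    (htwin : insert u (G.neighborSet u) = insert v (G.neighborSet v)) {b : V} (hvb : G.Adj v b) :
    collapseVertex huv v = collapseVertex huv b ∨
      (G.induce ({v}ᶜ : Set V)).Adj (collapseVertex huv v) (collapseVertex huv b) := by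
  rw [collapseVertex_self, collapseVertex_of_ne huv hvb.ne.symm]
  simpa [Subtype.ext_iff] using eq_or_adj_of_adj_of_closed_nbhd_eq htwin hvb

lemma collapseVertex_eq_or_adj (huv : u ≠ v)
    (htwin : insert u (G.neighborSet u) = insert v (G.neighborSet v)) {a b : V} (hab : G.Adj a b) :
    collapseVertex huv a = collapseVertex huv b ∨
      (G.induce ({v}ᶜ : Set V)).Adj (collapseVertex huv a) (collapseVertex huv b) := by
  by_cases ha : a = v
  · subst ha
    exact collapseVertex_eq_or_adj_of_adj_self huv htwin hab
  by_cases hb : b = v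
  · subst hb
    rw [eq_comm, adj_comm]
    exact collapseVertex_eq_or_adj_of_adj_self huv htwin hab.symm
  rw [collapseVertex_of_ne huv ha, collapseVertex_of_ne huv hb]
  exact Or.inr hab

end SimpleGraph

/-- If `u ≠ v` are true twins in `G` and `G'` is the induced subgraph of `G` on
`V(G) \ {v}`, then distances in `G'` agree with distances in `G`. -/
theorem dist_induce_eq_of_true_twins {V : Type*} (G : SimpleGraph V) (u v : V)
    (huv : u ≠ v)
    (htwin : insert u (G.neighborSet u) = insert v (G.neighborSet v)) :
    ∀ x y : ({v}ᶜ : Set V), (G.induce ({v}ᶜ : Set V)).dist x y = G.dist x y := by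
  intro x y
  have hretract : ∀ z : ({v}ᶜ : Set V), collapseVertex huv z = z := fun z ↦
    collapseVertex_of_ne huv z.2
  have hle : (G.induce ({v}ᶜ : Set V)).edist x y ≤ G.edist x y := by
    simpa only [hretract] using
      edist_le_edist_of_adj_or_eq (fun _ _ ↦ collapseVertex_eq_or_adj huv htwin) x y
  have hge : G.edist x y ≤ (G.induce ({v}ᶜ : Set V)).edist x y :=
    edist_le_edist_of_adj_or_eq (f := Subtype.val) (fun _ _ hab ↦ Or.inr hab) x y
  exact congrArg ENat.toNat (le_antisymm hle hge)
end

section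
/- Let G be a connected (P_4 + P_1)-free graph with a vertex u, let B = N(u) and C = V(G) \ N[u]. If a vertex b ∈ B has both a neighbour and a non-neighbour in a single connected component of G[C], then b is adjacent to every vertex of every other connected component of G[C]. -/
open SimpleGraph

/-- The graph `P₄ + P₁`: the disjoint union of a path on 4 vertices and an
isolated vertex. -/
def P4PlusP1 : SimpleGraph (Fin 4 ⊕ Fin 1) := pathGraph 4 ⊕g (⊥ : SimpleGraph (Fin 1))

private lemma exists_boundary {V : Type*} (H : SimpleGraph V) (P : V → Prop) :
    ∀ {a c : V}, H.Walk a c → P a → ¬ P c →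
    ∃ x y, H.Adj x y ∧ P x ∧ ¬ P y ∧ H.Reachable a x := by
  intro a c w
  induction w with
  | nil => intro ha hc; exact absurd ha hc
  | @cons v w c h p ih =>
    intro ha hc
    by_cases hw : P w
    · obtain ⟨x, y, hxy, hx, hy, hr⟩ := ih hw hc
      exact ⟨x, y, hxy, hx, hy, (h.reachable).trans hr⟩
    · exact ⟨v, w, h, ha, hw, Reachable.refl _⟩

/-- In a connected `(P₄ + P₁)`-free graph, if a neighbour `b` of `u` has a neighbour
`c₁` and a non-neighbour `c₂` in a single connected component of `G[C]`
(where `C = V(G) \ N[u]`), then `b` is adjacent to every vertex `c₃` of every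
other connected component of `G[C]`. -/
theorem adj_other_components {V : Type*} (G : SimpleGraph V)
    (hconn : G.Connected) (hfree : HFree G P4PlusP1)
    (u b : V) (hub : G.Adj u b)
    (C : Set V) (hC : C = (insert u (G.neighborSet u))ᶜ)
    (c₁ c₂ c₃ : V) (hc₁ : c₁ ∈ C) (hc₂ : c₂ ∈ C) (hc₃ : c₃ ∈ C)
    (hsame : (G.induce C).Reachable ⟨c₁, hc₁⟩ ⟨c₂, hc₂⟩)
    (hbc₁ : G.Adj b c₁) (hbc₂ : ¬ G.Adj b c₂)
    (hother : ¬ (G.induce C).Reachable ⟨c₁, hc₁⟩ ⟨c₃, hc₃⟩) :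
    G.Adj b c₃ := by
  by_contra hbc₃
  -- facts about membership in C
  have hCmem : ∀ v : V, v ∈ C → v ≠ u ∧ ¬ G.Adj u v := by
    intro v hv
    rw [hC] at hv
    simp only [Set.mem_compl_iff, Set.mem_insert_iff, mem_neighborSet, not_or] at hv
    exact hv
  have hbC : b ∉ C := by
    intro hb
    exact (hCmem b hb).2 hub
  -- find boundary edge
  obtain ⟨w⟩ := hsame
  obtain ⟨x, y, hxy, hbx, hby, hrx⟩ :=
    exists_boundary (G.induce C) (fun v => G.Adj b v.val) w hbc₁ hbc₂
  have hry : (G.induce C).Reachable ⟨c₁, hc₁⟩ y := hrx.trans hxy.reachable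
  have hGxy : G.Adj x.val y.val := hxy
  -- c₃ is not adjacent to x or y, and differs from them
  have hc₃x : ¬ G.Adj c₃ x.val := by
    intro h
    have h' : (G.induce C).Adj x ⟨c₃, hc₃⟩ := by simpa using h.symm
    exact hother (hrx.trans h'.reachable)
  have hc₃y : ¬ G.Adj c₃ y.val := by
    intro h
    have h' : (G.induce C).Adj y ⟨c₃, hc₃⟩ := by simpa using h.symm
    exact hother (hry.trans h'.reachable)
  have hc₃nex : c₃ ≠ x.val := by
    intro h
    apply hother
    have e : (⟨c₃, hc₃⟩ : C) = x := Subtype.ext h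
    rw [e]; exact hrx
  have hc₃ney : c₃ ≠ y.val := by
    intro h
    apply hother
    have e : (⟨c₃, hc₃⟩ : C) = y := Subtype.ext h
    rw [e]; exact hry
  obtain ⟨hxu, hux⟩ := hCmem x.val x.2
  obtain ⟨hyu, huy⟩ := hCmem y.val y.2
  obtain ⟨hc₃u, huc₃⟩ := hCmem c₃ hc₃
  have hxb : x.val ≠ b := fun h => hbC (h ▸ x.2)
  have hyb : y.val ≠ b := fun h => hbC (h ▸ y.2)
  have hc₃b : c₃ ≠ b := fun h => hbC (h ▸ hc₃)
  -- build the forbidden embedding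
  let f : Fin 4 ⊕ Fin 1 → V := Sum.elim ![y.val, x.val, b, u] (fun _ => c₃)
  have hinj : Function.Injective f := by
    have h01 : y.val ≠ x.val := hGxy.ne'
    rintro (a | a) (c | c) hac <;> fin_cases a <;> fin_cases c <;>
      simp_all [f, eq_comm] <;>
      first
      | rfl
      | exact absurd hac.symm hGxy.ne'
      | exact absurd hac hGxy.ne'
      | exact absurd hac hby.ne'
      | exact absurd hac.symm hby.ne'
      | exact absurd hac hbx.ne'
      | exact absurd hac.symm hbx.ne'
      | exact absurd hac hub.ne'
      | exact absurd hac.symm hub.ne'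
  have hrel : ∀ a c, G.Adj (f a) (f c) ↔ P4PlusP1.Adj a c := by
    rintro (a | a) (c | c) <;> fin_cases a <;> fin_cases c <;>
      simp_all [f, P4PlusP1, pathGraph_adj, SimpleGraph.sum_adj, Matrix.cons_val_zero,
        Matrix.cons_val_one, G.adj_comm] <;>
      first
      | exact hGxy.symm
      | exact hbx.symm
      | exact fun h => hby h.symm
      | exact fun h => huy h
      | exact fun h => hux h
      | exact fun h => hc₃y h.symm
      | exact fun h => hc₃x h.symm
      | exact fun h => hbc₃ h.symm
      | exact fun h => huc₃ h.symm
      | exact hbx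
      | exact hub
      | exact hub.symm
      | exact hGxy
      | decide
      | omega
  exact hfree.elim ⟨⟨f, hinj⟩, fun {a c} => hrel a c⟩
end

section
/- Every connected (P_3 + 2P_1)-free graph has diameter at most 5. -/
open SimpleGraph

/-- The graph `P₃ + 2P₁`: the disjoint union of a path on 3 vertices and two
isolated vertices. -/
def P3Plus2P1 : SimpleGraph (Fin 3 ⊕ Fin 2) := pathGraph 3 ⊕g (⊥ : SimpleGraph (Fin 2))

private lemma dist_start_getVert_le {V : Type*} (G : SimpleGraph V) (hconn : G.Connected)
    {u v : V} (w : G.Walk u v) (i : ℕ) : G.dist u (w.getVert i) ≤ i := by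
  induction w generalizing i with
  | nil => simp [SimpleGraph.Walk.getVert, SimpleGraph.dist_self]
  | @cons a b c h q ih =>
    match i with
    | 0 => simp
    | (i+1) =>
      calc G.dist a ((SimpleGraph.Walk.cons h q).getVert (i+1))
          ≤ G.dist a b + G.dist b (q.getVert i) := hconn.dist_triangle
        _ ≤ 1 + i := by
            have h1 : G.dist a b ≤ 1 := G.dist_le (SimpleGraph.Walk.cons h SimpleGraph.Walk.nil)
            exact Nat.add_le_add h1 (ih i)
        _ = i + 1 := by omega

private lemma dist_getVert_end_le {V : Type*} (G : SimpleGraph V)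
    {u v : V} (w : G.Walk u v) (i : ℕ) : G.dist (w.getVert i) v ≤ w.length - i := by
  induction w generalizing i with
  | nil => simp [SimpleGraph.Walk.getVert]
  | @cons a b c h q ih =>
    match i with
    | 0 =>
      simpa using G.dist_le (SimpleGraph.Walk.cons h q)
    | (i+1) =>
      simpa using ih i

/-- Every connected `(P₃ + 2P₁)`-free graph has diameter at most 5. -/
theorem diameter_le_five_of_P3Plus2P1_free {V : Type*} (G : SimpleGraph V)
    (hconn : G.Connected) (hfree : HFree G P3Plus2P1) :
    ∀ u v : V, G.dist u v ≤ 5 := by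
  intro u v
  by_contra hd
  push_neg at hd
  obtain ⟨w, hw⟩ := hconn.exists_walk_length_eq_dist u v
  set d := G.dist u v with hdd
  have hlen : w.length = d := hw
  -- key separation lemma
  have key : ∀ i j : ℕ, i ≤ j → j ≤ d → j - i ≤ G.dist (w.getVert i) (w.getVert j) := by
    intro i j hij hjd
    have h1 : G.dist u (w.getVert i) ≤ i := dist_start_getVert_le G hconn w i
    have h2 : G.dist (w.getVert j) v ≤ d - j := by
      simpa [hlen] using dist_getVert_end_le G w j
    have htri : d ≤ G.dist u (w.getVert i) + G.dist (w.getVert i) (w.getVert j)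
        + G.dist (w.getVert j) v := by
      calc d = G.dist u v := rfl
        _ ≤ G.dist u (w.getVert j) + G.dist (w.getVert j) v := hconn.dist_triangle
        _ ≤ (G.dist u (w.getVert i) + G.dist (w.getVert i) (w.getVert j))
              + G.dist (w.getVert j) v := by
            exact Nat.add_le_add_right hconn.dist_triangle _
    omega
  have hne : ∀ i j : ℕ, i < j → j ≤ d → w.getVert i ≠ w.getVert j := by
    intro i j hij hjd heq
    have := key i j (le_of_lt hij) hjd
    rw [heq] at this
    simp [SimpleGraph.dist_self] at this
    omega
  have hnadj : ∀ i j : ℕ, i + 2 ≤ j → j ≤ d → ¬ G.Adj (w.getVert i) (w.getVert j) := by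
    intro i j hij hjd hadj
    have h1 : G.dist (w.getVert i) (w.getVert j) ≤ 1 :=
      G.dist_le (SimpleGraph.Walk.cons hadj SimpleGraph.Walk.nil)
    have := key i j (by omega) hjd
    omega
  have hadj : ∀ i : ℕ, i < d → G.Adj (w.getVert i) (w.getVert (i+1)) := by
    intro i hi
    exact w.adj_getVert_succ (by omega)
  -- build the embedding
  have h6 : 6 ≤ d := hd
  let f : Fin 3 ⊕ Fin 2 → V := fun x => match x with
    | Sum.inl k => w.getVert k.val
    | Sum.inr ⟨0, _⟩ => w.getVert 4
    | Sum.inr ⟨1, _⟩ => w.getVert 6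
  have hidx : ∀ x : Fin 3 ⊕ Fin 2, ∃ i : ℕ, i ≤ 6 ∧ f x = w.getVert i ∧
      ((∃ k : Fin 3, x = Sum.inl k ∧ i = k.val) ∨
       (x = Sum.inr 0 ∧ i = 4) ∨ (x = Sum.inr 1 ∧ i = 6)) := by
    rintro (k | ⟨m, hm⟩)
    · exact ⟨k.val, by omega, rfl, Or.inl ⟨k, rfl, rfl⟩⟩
    · match m, hm with
      | 0, _ => exact ⟨4, by omega, rfl, Or.inr (Or.inl ⟨rfl, rfl⟩)⟩
      | 1, _ => exact ⟨6, by omega, rfl, Or.inr (Or.inr ⟨rfl, rfl⟩)⟩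
  have finj : Function.Injective f := by
    rintro x y hxy
    obtain ⟨i, hi6, hfi, hxi⟩ := hidx x
    obtain ⟨j, hj6, hfj, hyj⟩ := hidx y
    have hij : i = j := by
      by_contra hne'
      rcases Nat.lt_or_ge i j with h | h
      · exact hne i j h (by omega) (by rw [← hfi, ← hfj, hxy])
      · exact hne j i (by omega) (by omega) (by rw [← hfi, ← hfj, hxy])
    -- now conclude x = y
    rcases hxi with ⟨k, rfl, rfl⟩ | ⟨rfl, rfl⟩ | ⟨rfl, rfl⟩ <;>
      rcases hyj with ⟨k', rfl, rfl⟩ | ⟨rfl, rfl⟩ | ⟨rfl, rfl⟩ <;>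
      first
      | (congr 1; exact Fin.ext hij)
      | rfl
      | (exfalso; omega)
  refine hfree.elim ⟨⟨f, finj⟩, ?_⟩
  rintro (k | ⟨m, hm⟩) (k' | ⟨m', hm'⟩)
  · -- inl inl : pathGraph adjacency
    simp only [P3Plus2P1, SimpleGraph.sum_adj, pathGraph_adj]
    constructor
    · intro hGadj
      by_contra hpath
      push_neg at hpath
      -- k.val, k'.val ≤ 2, not consecutive, so equal or differ by ≥ 2
      have hk : k.val < 3 := k.isLt
      have hk' : k'.val < 3 := k'.isLt
      rcases Nat.lt_trichotomy k.val k'.val with h | h | h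
      · rcases Nat.lt_or_ge (k.val + 1) k'.val with h2 | h2
        · exact hnadj k.val k'.val (by omega) (by omega) hGadj
        · exact hpath.1 (by omega)
      · have hkk : k = k' := Fin.ext h
        subst hkk
        exact G.irrefl hGadj
      · rcases Nat.lt_or_ge (k'.val + 1) k.val with h2 | h2
        · exact (hnadj k'.val k.val (by omega) (by omega) hGadj.symm)
        · exact hpath.2 (by omega)
    · rintro (h | h)
      · have : k'.val = k.val + 1 := by omega
        simpa [f, this] using hadj k.val (by omega)
      · have hk1 : k.val = k'.val + 1 := by omega
        have h2 := (hadj k'.val (by omega)).symm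
        simpa [f, hk1] using h2
  · -- inl inr
    simp only [P3Plus2P1, SimpleGraph.sum_adj]
    constructor
    · intro hGadj
      exfalso
      match m', hm' with
      | 0, _ => exact hnadj k.val 4 (by omega) (by omega) hGadj
      | 1, _ => exact hnadj k.val 6 (by omega) (by omega) hGadj
    · intro h; exact absurd h (by simp)
  · -- inr inl
    simp only [P3Plus2P1, SimpleGraph.sum_adj]
    constructor
    · intro hGadj
      exfalso
      match m, hm with
      | 0, _ => exact hnadj k'.val 4 (by omega) (by omega) hGadj.symm
      | 1, _ => exact hnadj k'.val 6 (by omega) (by omega) hGadj.symm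
    · intro h; exact absurd h (by simp)
  · -- inr inr
    simp only [P3Plus2P1, SimpleGraph.sum_adj, SimpleGraph.bot_adj]
    constructor
    · intro hGadj
      exfalso
      match m, hm, m', hm' with
      | 0, _, 0, _ => exact G.irrefl hGadj
      | 0, _, 1, _ => exact hnadj 4 6 (by omega) (by omega) hGadj
      | 1, _, 0, _ => exact hnadj 4 6 (by omega) (by omega) hGadj.symm
      | 1, _, 1, _ => exact G.irrefl hGadj
    · intro h; exact absurd h (by simp)
end

section
/- Every connected (P_2 + 3P_1)-free graph has diameter at most 6. -/
open SimpleGraph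

/-- The graph `P₂ + 3P₁`: the disjoint union of an edge and three isolated vertices. -/
def P2Plus3P1 : SimpleGraph (Fin 2 ⊕ Fin 3) := pathGraph 2 ⊕g (⊥ : SimpleGraph (Fin 3))

private lemma dist_getVert_le {V : Type*} {G : SimpleGraph V} (hconn : G.Connected)
    {u v : V} (p : G.Walk u v) :
    ∀ i, G.dist u (p.getVert i) ≤ i := by
  intro i
  induction i with
  | zero => simp
  | succ n ih =>
    by_cases h : n < p.length
    · have hadj := p.adj_getVert_succ h
      have h1 : G.dist (p.getVert n) (p.getVert (n+1)) = 1 :=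
        SimpleGraph.dist_eq_one_iff_adj.mpr hadj
      have h2 : G.dist u (p.getVert (n+1)) ≤
          G.dist u (p.getVert n) + G.dist (p.getVert n) (p.getVert (n+1)) :=
        hconn.dist_triangle
      omega
    · rw [p.getVert_of_length_le (by omega), ← p.getVert_of_length_le (le_of_not_gt h)]
      omega

/-- Every connected `(P₂ + 3P₁)`-free graph has diameter at most 6. -/
theorem diameter_le_six_of_P2Plus3P1_free {V : Type*} (G : SimpleGraph V)
    (hconn : G.Connected) (hfree : HFree G P2Plus3P1) :
    ∀ u v : V, G.dist u v ≤ 6 := by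
  intro u v
  by_contra h
  push_neg at h
  obtain ⟨p, hp⟩ := (hconn u v).exists_walk_length_eq_dist
  set n := G.dist u v with hn
  have hn7 : 7 ≤ n := h
  set a : ℕ → V := fun i => p.getVert i with ha
  have hdu : ∀ i, G.dist u (a i) ≤ i := dist_getVert_le hconn p
  have hdv : ∀ i ≤ n, G.dist (a i) v ≤ n - i := by
    intro i hi
    have h1 := dist_getVert_le hconn p.reverse (n - i)
    have hrev : p.reverse.getVert (n - i) = a i := by
      rw [SimpleGraph.Walk.getVert_reverse]
      simp only [ha]
      congr 1
      omega
    rw [hrev] at h1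
    rwa [G.dist_comm]
  have hde : ∀ i ≤ n, G.dist u (a i) = i := by
    intro i hi
    by_contra hne
    have h1 : G.dist u (a i) < i := lt_of_le_of_ne (hdu i) hne
    have h2 := hdv i hi
    have h3 : n ≤ G.dist u (a i) + G.dist (a i) v := hconn.dist_triangle
    omega
  have hkey : ∀ i j, i ≤ j → j ≤ n → j - i ≤ G.dist (a i) (a j) := by
    intro i j hij hjn
    have h1 : G.dist u (a j) ≤ G.dist u (a i) + G.dist (a i) (a j) := hconn.dist_triangle
    rw [hde i (hij.trans hjn), hde j hjn] at h1
    omega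
  have hnadj : ∀ i j, i + 2 ≤ j → j ≤ n → ¬ G.Adj (a i) (a j) := by
    intro i j hij hjn hadj
    have h1 := hkey i j (by omega) hjn
    rw [SimpleGraph.dist_eq_one_iff_adj.mpr hadj] at h1
    omega
  have hainj : ∀ i j, i ≤ n → j ≤ n → a i = a j → i = j := by
    intro i j hi hj heq
    rw [← hde i hi, ← hde j hj, heq]
  have hadj01 : G.Adj (a 0) (a 1) := p.adj_getVert_succ (by omega)
  set g : Fin 2 ⊕ Fin 3 → ℕ := Sum.elim Fin.val (fun i => 2 * i.val + 3) with hg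
  set f : Fin 2 ⊕ Fin 3 → V := fun x => a (g x) with hf
  have hgle : ∀ x, g x ≤ 7 := by
    rintro (x | x) <;> simp only [hg, Sum.elim_inl, Sum.elim_inr] <;> omega
  have hinj : Function.Injective f := by
    intro x y hxy
    have hge : g x = g y := hainj _ _ (le_trans (hgle x) hn7) (le_trans (hgle y) hn7) hxy
    rcases x with x | x <;> rcases y with y | y <;>
      simp only [hg, Sum.elim_inl, Sum.elim_inr] at hge
    · exact congrArg Sum.inl (Fin.ext hge)
    · exact absurd hge (by omega)
    · exact absurd hge (by omega)
    · exact congrArg Sum.inr (Fin.ext (by omega))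
  refine hfree.elim ⟨⟨f, hinj⟩, ?_⟩
  intro x y
  show G.Adj (f x) (f y) ↔ P2Plus3P1.Adj x y
  have hN : ∀ i j : ℕ, (i + 2 ≤ j ∧ j ≤ 7) ∨ (j + 2 ≤ i ∧ i ≤ 7) ∨ i = j →
      ¬ G.Adj (a i) (a j) := by
    rintro i j (⟨h1, h2⟩ | ⟨h1, h2⟩ | rfl)
    · exact hnadj i j h1 (by omega)
    · exact fun hh => hnadj j i h1 (by omega) hh.symm
    · exact G.irrefl
  rcases x with x | x <;> rcases y with y | y <;> fin_cases x <;> fin_cases y <;>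
    simp only [hf, hg, Sum.elim_inl, Sum.elim_inr, P2Plus3P1, SimpleGraph.sum_adj,
      pathGraph_adj, SimpleGraph.bot_adj, Fin.isValue, Fin.val_zero, Fin.val_one,
      Fin.val_two] <;> norm_num <;>
    first
      | exact hadj01
      | exact hadj01.symm
      | exact hN _ _ (by norm_num)
end

section
/- Let G be a (P_2 + 3P_1)-free graph containing two non-adjacent vertices u and v. Then the induced subgraph on the set C of vertices non-adjacent to both u and v is a complete multipartite graph. -/
open SimpleGraph

/-!
If `a, b, c ∈ C` with `b` non-adjacent to both `a` and `c` but `a` adjacent to `c`, then the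
edge `ac` together with the independent triple `{b, u, v}` induces a `P₂ + 3P₁`, because no
vertex of `C` is adjacent to `u` or `v`. So non-adjacency is transitive on `C`: the complement
of `G[C]` is `P₃`-free.
-/

namespace SimpleGraph

variable {V W W' : Type*} {G : SimpleGraph V} {H : SimpleGraph W} {H' : SimpleGraph W'}

def Embedding.sumElim (f : H ↪g G) (g : H' ↪g G) (hne : ∀ a b, f a ≠ g b)
    (hadj : ∀ a b, ¬ G.Adj (f a) (g b)) : H ⊕g H' ↪g G where
  toFun := Sum.elim f g
  inj' := by
    rintro (a | a) (b | b) h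
    · exact congrArg _ (f.injective h)
    · exact absurd h (hne a b)
    · exact absurd h.symm (hne b a)
    · exact congrArg _ (g.injective h)
  map_rel_iff' := by
    rintro (a | a) (b | b)
    · exact f.map_adj_iff
    · exact iff_of_false (hadj a b) (by simp)
    · exact iff_of_false (fun h => hadj b a h.symm) (by simp)
    · exact g.map_adj_iff

def Embedding.botOfNotAdj (f : W ↪ V) (h : ∀ a b, ¬ G.Adj (f a) (f b)) :
    (⊥ : SimpleGraph W) ↪g G where
  toEmbedding := f
  map_rel_iff' {a b} := iff_of_false (h a b) id

def Embedding.pathGraphTwo {x y : V} (h : G.Adj x y) : pathGraph 2 ↪g G where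
  toFun := ![x, y]
  inj' := by
    intro i j hij
    fin_cases i <;> fin_cases j <;> simp_all [h.ne, h.ne.symm]
  map_rel_iff' {i j} := by
    change G.Adj (![x, y] i) (![x, y] j) ↔ _
    rw [pathGraph_two_eq_top]
    fin_cases i <;> fin_cases j <;> simp [h, h.symm]

@[simp] lemma Embedding.coe_botOfNotAdj (f : W ↪ V) (h : ∀ a b, ¬ G.Adj (f a) (f b)) :
    ⇑(Embedding.botOfNotAdj f h) = f := rfl

@[simp] lemma Embedding.coe_pathGraphTwo {x y : V} (h : G.Adj x y) :
    ⇑(Embedding.pathGraphTwo h) = ![x, y] := rfl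

lemma hFree_pathGraph_three_of_adj_trans
    (h : ∀ a b c, G.Adj a b → G.Adj b c → a ≠ c → G.Adj a c) : HFree G (pathGraph 3) := by
  refine ⟨fun f => ?_⟩
  have h01 : (pathGraph 3).Adj 0 1 := by simp [pathGraph_adj]
  have h12 : (pathGraph 3).Adj 1 2 := by simp [pathGraph_adj]
  have h02 : ¬ (pathGraph 3).Adj 0 2 := by simp [pathGraph_adj]
  exact h02 (f.map_adj_iff.1 (h _ _ _ (f.map_adj_iff.2 h01) (f.map_adj_iff.2 h12)
    (f.injective.ne (by decide))))

end SimpleGraph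

/-- In a `(P₂ + 3P₁)`-free graph with two non-adjacent vertices `u ≠ v`, the
subgraph induced on the set `C` of (other) vertices non-adjacent to both `u` and `v`
is complete multipartite, i.e. its complement is `P₃`-free. -/
theorem induce_nonneighbors_completeMultipartite {V : Type*} (G : SimpleGraph V)
    (hfree : HFree G P2Plus3P1) (u v : V) (hne : u ≠ v) (huv : ¬ G.Adj u v) :
    HFree ((G.induce {c : V | c ≠ u ∧ c ≠ v ∧ ¬ G.Adj u c ∧ ¬ G.Adj v c})ᶜ)
      (pathGraph 3) := by
  refine hFree_pathGraph_three_of_adj_trans ?_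
  rintro ⟨a, hau, hav, hua, hva⟩ ⟨b, hbu, hbv, hub, hvb⟩ ⟨c, hcu, hcv, huc, hvc⟩ hab hbc hac
  simp only [compl_adj, comap_adj, Function.Embedding.coe_subtype, ne_eq, Subtype.mk.injEq]
    at hab hbc hac ⊢
  refine ⟨hac, fun hGac => hfree.false ?_⟩
  refine .sumElim (.pathGraphTwo hGac) (.botOfNotAdj ⟨![b, u, v], ?_⟩ ?_) ?_ ?_ <;>
    simp only [Function.Injective, Embedding.coe_pathGraphTwo, Embedding.coe_botOfNotAdj,
      Function.Embedding.coeFn_mk, Fin.forall_fin_succ, IsEmpty.forall_iff,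
      Matrix.cons_val_zero, Matrix.cons_val_succ] <;>
    grind [G.adj_comm, G.irrefl]
end

section
/- Every connected (2P_2 + P_1)-free graph has diameter at most 5. -/
open SimpleGraph

/-- The graph `2P₂ + P₁`: the disjoint union of two edges and an isolated vertex. -/
def TwoP2PlusP1 : SimpleGraph ((Fin 2 ⊕ Fin 2) ⊕ Fin 1) :=
  (pathGraph 2 ⊕g pathGraph 2) ⊕g (⊥ : SimpleGraph (Fin 1))

private lemma walk_dist_le {V : Type*} {G : SimpleGraph V} (hconn : G.Connected)
    {u v : V} (p : G.Walk u v) (i k : ℕ) (hk : i + k ≤ p.length) :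
    G.dist (p.getVert i) (p.getVert (i + k)) ≤ k := by
  induction k with
  | zero => simp
  | succ n ih =>
    have h1 : G.dist (p.getVert i) (p.getVert (i + n)) ≤ n := ih (by omega)
    have hadj : G.Adj (p.getVert (i + n)) (p.getVert (i + n + 1)) :=
      p.adj_getVert_succ (by omega)
    have h2 : G.dist (p.getVert (i + n)) (p.getVert (i + n + 1)) = 1 :=
      (SimpleGraph.dist_eq_one_iff_adj).mpr hadj
    have htri := hconn.dist_triangle (u := p.getVert i)
      (v := p.getVert (i + n)) (w := p.getVert (i + n + 1))
    have : i + (n + 1) = i + n + 1 := by omega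
    rw [this]
    omega

/-- Every connected `(2P₂ + P₁)`-free graph has diameter at most 5. -/
theorem diameter_le_five_of_2P2PlusP1_free {V : Type*} (G : SimpleGraph V)
    (hconn : G.Connected) (hfree : HFree G TwoP2PlusP1) :
    ∀ u v : V, G.dist u v ≤ 5 := by
  intro u v
  by_contra hlt
  push_neg at hlt
  obtain ⟨p, hp⟩ := hconn.exists_walk_length_eq_dist u v
  have hL6 : 6 ≤ G.dist u v := hlt
  -- exact distance between vertices on shortest walk
  have key : ∀ i j : ℕ, i ≤ j → j ≤ G.dist u v →
      G.dist (p.getVert i) (p.getVert j) = j - i := by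
    intro i j hij hjL
    have hub : G.dist (p.getVert i) (p.getVert j) ≤ j - i := by
      have := walk_dist_le hconn p i (j - i) (by omega)
      simpa [show i + (j - i) = j by omega] using this
    have h1 : G.dist u (p.getVert i) ≤ i := by
      have := walk_dist_le hconn p 0 i (by omega)
      simpa [p.getVert_zero] using this
    have h2 : G.dist (p.getVert j) v ≤ G.dist u v - j := by
      have := walk_dist_le hconn p j (G.dist u v - j) (by omega)
      simpa [show j + (G.dist u v - j) = G.dist u v by omega,
        hp ▸ p.getVert_length] using this
    have t1 := hconn.dist_triangle (u := u) (v := p.getVert j) (w := v)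
    have t2 := hconn.dist_triangle (u := u) (v := p.getVert i) (w := p.getVert j)
    omega
  have hdistinct : ∀ i j : ℕ, i < j → j ≤ G.dist u v → p.getVert i ≠ p.getVert j := by
    intro i j hij hjL h
    have h2 := key i j (le_of_lt hij) hjL
    rw [h, SimpleGraph.dist_self] at h2
    omega
  have hnadj : ∀ i j : ℕ, i + 2 ≤ j → j ≤ G.dist u v →
      ¬ G.Adj (p.getVert i) (p.getVert j) := by
    intro i j hij hjL h
    have h1 : G.dist (p.getVert i) (p.getVert j) = 1 :=
      (SimpleGraph.dist_eq_one_iff_adj).mpr h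
    have h2 := key i j (by omega) hjL
    omega
  have hadj01 : G.Adj (p.getVert 0) (p.getVert 1) := p.adj_getVert_succ (by omega)
  have hadj56 : G.Adj (p.getVert 5) (p.getVert 6) := by
    have := p.adj_getVert_succ (i := 5) (by omega)
    simpa using this
  let f : (Fin 2 ⊕ Fin 2) ⊕ Fin 1 → V :=
    Sum.elim (Sum.elim ![p.getVert 0, p.getVert 1] ![p.getVert 5, p.getVert 6])
      ![p.getVert 3]
  have hinj : Function.Injective f := by
    intro a b hab
    rcases a with (x | x) | x <;> rcases b with (y | y) | y <;>
      fin_cases x <;> fin_cases y <;>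
      simp only [f, Sum.elim_inl, Sum.elim_inr, Matrix.cons_val_zero, Matrix.cons_val_one,
        Matrix.head_cons] at hab ⊢ <;>
      first
        | rfl
        | exact absurd hab (hdistinct _ _ (by omega) (by omega))
        | exact absurd hab.symm (hdistinct _ _ (by omega) (by omega))
  have hrel : ∀ a b, G.Adj (f a) (f b) ↔ TwoP2PlusP1.Adj a b := by
    intro a b
    rcases a with (x | x) | x <;> rcases b with (y | y) | y <;>
      fin_cases x <;> fin_cases y <;>
      simp only [f, Sum.elim_inl, Sum.elim_inr, Matrix.cons_val_zero, Matrix.cons_val_one,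
        Matrix.head_cons, TwoP2PlusP1, SimpleGraph.sum_adj, pathGraph_adj,
        SimpleGraph.bot_adj, iff_true, iff_false, Fin.isValue] <;>
      norm_num [-SimpleGraph.Walk.getVert_zero] <;>
      first
        | exact hadj01
        | exact hadj01.symm
        | exact hadj56
        | exact hadj56.symm
        | exact G.irrefl
        | exact hnadj _ _ (by omega) (by omega)
        | exact fun h => hnadj _ _ (by omega) (by omega) h.symm
  exact hfree.false ⟨⟨f, hinj⟩, fun {a b} => hrel a b⟩
end

section
/- Let G be a (2P_2 + P_1)-free graph with non-adjacent vertices u and v, let B_1 be the neighbours of u that are not neighbours of v, let B_2 be the neighbours of v that are not neighbours of u, and let C be the vertices adjacent to neither u nor v. Then for all b_1 ∈ B_1 and b_2 ∈ B_2 with b_1 not adjacent to b_2, every vertex of C is adjacent to b_1 or to b_2. -/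
open SimpleGraph

theorem SimpleGraph.injective_of_adj_iff {V W : Type*} {G : SimpleGraph V} {H : SimpleGraph W}
    (htwin : ∀ a b, (∀ x, H.Adj a x ↔ H.Adj b x) → a = b) {f : W → V}
    (hf : ∀ a b, G.Adj (f a) (f b) ↔ H.Adj a b) : Function.Injective f :=
  fun a b hab ↦ htwin a b fun x ↦ by rw [← hf, ← hf, hab]

theorem twoP2PlusP1_eq_of_forall_adj_iff (a b : (Fin 2 ⊕ Fin 2) ⊕ Fin 1)
    (h : ∀ x, TwoP2PlusP1.Adj a x ↔ TwoP2PlusP1.Adj b x) : a = b := by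
  simp only [Sum.forall, Fin.forall_fin_two, Fin.forall_fin_one] at h
  fin_cases a <;> fin_cases b <;> simp_all [TwoP2PlusP1, pathGraph_adj]

theorem HFree.false_of_induced_twoP2PlusP1 {V : Type*} {G : SimpleGraph V}
    (hfree : HFree G TwoP2PlusP1) {x₁ y₁ x₂ y₂ z : V}
    (h₁ : G.Adj x₁ y₁) (h₂ : G.Adj x₂ y₂)
    (hx₁x₂ : ¬ G.Adj x₁ x₂) (hx₁y₂ : ¬ G.Adj x₁ y₂) (hy₁x₂ : ¬ G.Adj y₁ x₂) (hy₁y₂ : ¬ G.Adj y₁ y₂)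
    (hx₁z : ¬ G.Adj x₁ z) (hy₁z : ¬ G.Adj y₁ z) (hx₂z : ¬ G.Adj x₂ z) (hy₂z : ¬ G.Adj y₂ z) :
    False := by
  set f : (Fin 2 ⊕ Fin 2) ⊕ Fin 1 → V := Sum.elim (Sum.elim ![x₁, y₁] ![x₂, y₂]) ![z]
  have hf : ∀ a b, G.Adj (f a) (f b) ↔ TwoP2PlusP1.Adj a b := by
    intro a b
    fin_cases a <;> fin_cases b <;>
      simp [f, TwoP2PlusP1, pathGraph_adj, G.adj_comm, *]
  -- The five vertices are distinct because no two vertices of `2P₂ + P₁` have the same neighbours.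
  exact hfree.false
    ⟨⟨f, injective_of_adj_iff twoP2PlusP1_eq_of_forall_adj_iff hf⟩, hf _ _⟩

theorem nonadjacent_pair_dominates_general {V : Type*} (G : SimpleGraph V)
    (hfree : HFree G TwoP2PlusP1) (u v : V) (huv : ¬ G.Adj u v)
    (b₁ b₂ : V) (hb₁u : G.Adj u b₁) (hb₁v : ¬ G.Adj v b₁)
    (hb₂v : G.Adj v b₂) (hb₂u : ¬ G.Adj u b₂) (hbb : ¬ G.Adj b₁ b₂)
    (c : V) (hcau : ¬ G.Adj u c) (hcav : ¬ G.Adj v c) :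
    G.Adj b₁ c ∨ G.Adj b₂ c := by
  by_contra! ⟨hb₁c, hb₂c⟩
  exact hfree.false_of_induced_twoP2PlusP1 hb₁u hb₂v huv hb₂u
    (fun h ↦ hb₁v h.symm) hbb hcau hb₁c hcav hb₂c

/-- In a `(2P₂ + P₁)`-free graph with non-adjacent `u ≠ v`: if `b₁` is a neighbour of
`u` but not of `v`, `b₂` is a neighbour of `v` but not of `u`, and `b₁` is not
adjacent to `b₂`, then every vertex `c` adjacent to neither `u` nor `v`
(and distinct from them) is adjacent to `b₁` or to `b₂`. -/
theorem nonadjacent_pair_dominates {V : Type*} (G : SimpleGraph V)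
    (hfree : HFree G TwoP2PlusP1) (u v : V) (hne : u ≠ v) (huv : ¬ G.Adj u v)
    (b₁ b₂ : V) (hb₁u : G.Adj u b₁) (hb₁v : ¬ G.Adj v b₁)
    (hb₂v : G.Adj v b₂) (hb₂u : ¬ G.Adj u b₂) (hbb : ¬ G.Adj b₁ b₂)
    (c : V) (hcu : c ≠ u) (hcv : c ≠ v) (hcau : ¬ G.Adj u c) (hcav : ¬ G.Adj v c) :
    G.Adj b₁ c ∨ G.Adj b₂ c :=
  nonadjacent_pair_dominates_general G hfree u v huv b₁ b₂ hb₁u hb₁v hb₂v hb₂u hbb c hcau hcav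
end
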